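/- Let A = (Q, Σ) be a PFA with |Q| = n. Define the DWA A' = (Q, Σ, γ) where each letter a acts totally by q ⊙ a = q·a if q·a is defined in A and q ⊙ a = q otherwise, and where γ(q, a) = 1 if q·a is defined in A and γ(q, a) = 2^n otherwise. Then A is carefully synchronizing if and only if A' has a reset word w with synchronization cost γ(w) ≤ 2^n − 1. -/
import Mathlib


/-- Apply a word to a state of a partial finite automaton: the result is `none` as soon
as an undefined transition is met. -/
def pApplyWord {Q A : Type*} (δ : Q → A → Option Q) (q : Q) : List A → Option Q
  | [] => some q
  | a :: w =>
      match δ q a with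
      | none => none
      | some q' => pApplyWord δ q' w

/-- `w` is a careful reset word for the PFA `δ`: every letter of `w` is defined at every
state reached along the way (starting from any state), and `w` sends all states to one
common state `p`. -/
def IsCarefulReset {Q A : Type*} (δ : Q → A → Option Q) (w : List A) : Prop :=
  ∃ p : Q, ∀ q : Q, pApplyWord δ q w = some p

/-- Apply a word (list of letters) to a state of a DFA with transition function `δ`. -/
def applyWord {Q A : Type*} (δ : Q → A → Q) (q : Q) : List A → Q
  | [] => q
  | a :: w => applyWord δ (δ q a) w

/-- `w` is a reset word for the DFA `δ`: it sends all states in `P` to one common state. -/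
def IsResetFrom {Q A : Type*} [DecidableEq Q] (δ : Q → A → Q) (P : Finset Q)
    (w : List A) : Prop :=
  (P.image fun q => applyWord δ q w).card = 1

/-- The cost `γ(q, w)` of applying the word `w` at the state `q` in a deterministic
weighted automaton with transition function `δ` and cost function `γ`. -/
def wordCost {Q A : Type*} (δ : Q → A → Q) (γ : Q → A → ℕ) (q : Q) : List A → ℕ
  | [] => 0
  | a :: w => γ q a + wordCost δ γ (δ q a) w

section Aux
variable {Q A : Type*} (δp : Q → A → Option Q)

lemma pApplyWord_append (u v : List A) (q : Q) :
    pApplyWord δp q (u ++ v) = (pApplyWord δp q u).bind (fun r => pApplyWord δp r v) := by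
  induction u generalizing q with
  | nil => simp [pApplyWord]
  | cons a u ih =>
    cases h : δp q a <;> simp [pApplyWord, h, ih]

lemma pApply_eq_some : ∀ (w : List A) (q r : Q), pApplyWord δp q w = some r →
    applyWord (fun q a => (δp q a).getD q) q w = r := by
  intro w
  induction w with
  | nil => intro q r h; simpa [pApplyWord, applyWord] using h
  | cons a w ih =>
    intro q r h
    cases hd : δp q a with
    | none => simp [pApplyWord, hd] at h
    | some q' =>
      simp only [pApplyWord, hd] at h
      simpa [applyWord, hd] using ih q' r h

lemma cost_eq_length (n : ℕ) : ∀ (w : List A) (q : Q), (pApplyWord δp q w).isSome →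
    wordCost (fun q a => (δp q a).getD q)
      (fun q a => if (δp q a).isSome then (1:ℕ) else 2 ^ n) q w = w.length := by
  intro w
  induction w with
  | nil => intro q _; simp [wordCost]
  | cons a w ih =>
    intro q h
    cases hd : δp q a with
    | none => simp [pApplyWord, hd] at h
    | some q' =>
      simp only [pApplyWord, hd] at h
      simp [wordCost, hd, ih q' h, Nat.add_comm]

lemma cost_le_defined (n : ℕ) : ∀ (w : List A) (q : Q),
    wordCost (fun q a => (δp q a).getD q)
      (fun q a => if (δp q a).isSome then (1:ℕ) else 2 ^ n) q w ≤ 2 ^ n - 1 →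
    pApplyWord δp q w = some (applyWord (fun q a => (δp q a).getD q) q w) := by
  intro w
  induction w with
  | nil => intro q _; simp [pApplyWord, applyWord]
  | cons a w ih =>
    intro q h
    cases hd : δp q a with
    | none =>
      exfalso
      simp only [wordCost, hd, Option.isSome_none, if_neg Bool.false_ne_true] at h
      have h2 : 1 ≤ 2 ^ n := Nat.one_le_two_pow
      omega
    | some q' =>
      simp only [wordCost, hd] at h
      have hle : wordCost (fun q a => (δp q a).getD q)
          (fun q a => if (δp q a).isSome then (1:ℕ) else 2 ^ n) q' w ≤ 2 ^ n - 1 := by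
        simpa [hd] using le_trans (Nat.le_add_left _ _) h
      simpa [pApplyWord, applyWord, hd] using ih q' hle
end Aux

section Main
variable {Q A : Type*} [Fintype Q] [Nonempty Q] [DecidableEq Q] (δp : Q → A → Option Q)

lemma shorten {w : List A} {p : Q} (hw : ∀ q : Q, pApplyWord δp q w = some p)
    {i j : ℕ} (hij : i ≤ j) (hj : j ≤ w.length)
    (himg : (Finset.univ.image fun q : Q => applyWord (fun q a => (δp q a).getD q) q (w.take i))
         = (Finset.univ.image fun q : Q => applyWord (fun q a => (δp q a).getD q) q (w.take j))) :
    ∀ q : Q, pApplyWord δp q (w.take i ++ w.drop j) = some p := by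
  intro q
  set δ := fun q a => (δp q a).getD q with hδ
  have hqi : ∃ r, pApplyWord δp q (w.take i) = some r := by
    have := hw q
    rw [show w = w.take i ++ w.drop i from (List.take_append_drop i w).symm,
      pApplyWord_append] at this
    cases hr : pApplyWord δp q (w.take i) with
    | none => rw [hr] at this; simp at this
    | some r => exact ⟨r, rfl⟩
  obtain ⟨r, hr⟩ := hqi
  have hrv : r = applyWord δ q (w.take i) := (pApply_eq_some δp _ q r hr).symm
  have hrmem : r ∈ Finset.univ.image fun q : Q => applyWord δ q (w.take j) := by
    rw [← himg]
    exact Finset.mem_image.mpr ⟨q, Finset.mem_univ q, hrv.symm⟩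
  obtain ⟨q', -, hq'⟩ := Finset.mem_image.mp hrmem
  have hsplit := hw q'
  rw [show w = w.take j ++ w.drop j from (List.take_append_drop j w).symm,
    pApplyWord_append] at hsplit
  cases hr' : pApplyWord δp q' (w.take j) with
  | none => rw [hr'] at hsplit; simp at hsplit
  | some r' =>
    rw [hr'] at hsplit
    simp only [Option.bind_some] at hsplit
    have hrr : r' = r := by
      have h2 := pApply_eq_some δp _ q' r' hr'
      exact h2.symm.trans hq'
    rw [pApplyWord_append, hr, Option.bind_some, ← hrr]
    exact hsplit

lemma forward_aux' : ∀ (n : ℕ) (w : List A), w.length = n → IsCarefulReset δp w →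
    ∃ w' : List A, IsCarefulReset δp w' ∧ w'.length ≤ 2 ^ Fintype.card Q - 1 := by
  intro n
  induction n using Nat.strong_induction_on with
  | _ n ih =>
    intro w hn hw
    set δ := fun q a => (δp q a).getD q with hδ
    by_cases hinj : Function.Injective
        (fun i : Fin (w.length + 1) =>
          Finset.univ.image fun q : Q => applyWord δ q (w.take i))
    · refine ⟨w, hw, ?_⟩
      have hcard : w.length + 1 ≤ Fintype.card (Finset Q) := by
        simpa using Fintype.card_le_of_injective _ hinj
      rw [Fintype.card_finset] at hcard
      omega
    · rw [Function.not_injective_iff] at hinj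
      obtain ⟨i, j, heq, hne⟩ := hinj
      -- wlog i < j
      rcases lt_or_gt_of_ne (fun h => hne (by exact_mod_cast h)) with hlt | hlt
      case _ =>
        obtain ⟨p, hp⟩ := hw
        have hshort := shorten δp hp (le_of_lt hlt) (Nat.lt_succ_iff.mp j.isLt) heq
        have hlen : (w.take i ++ w.drop j).length < n := by
          have hi : (i : ℕ) ≤ w.length := Nat.lt_succ_iff.mp i.isLt
          have hj : (j : ℕ) ≤ w.length := Nat.lt_succ_iff.mp j.isLt
          simp only [List.length_append, List.length_take, List.length_drop]
          omega
        exact ih _ (hn ▸ hlen) _ rfl ⟨p, hshort⟩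
      case _ =>
        obtain ⟨p, hp⟩ := hw
        have hshort := shorten δp hp (le_of_lt hlt) (Nat.lt_succ_iff.mp i.isLt) heq.symm
        have hlen : (w.take j ++ w.drop i).length < n := by
          have hi : (i : ℕ) ≤ w.length := Nat.lt_succ_iff.mp i.isLt
          have hj : (j : ℕ) ≤ w.length := Nat.lt_succ_iff.mp j.isLt
          simp only [List.length_append, List.length_take, List.length_drop]
          omega
        exact ih _ (hn ▸ hlen) _ rfl ⟨p, hshort⟩
end Main

/-- Let `δp` be a PFA with `n` states and let `A'` be the DWA obtained from it by letting
each undefined transition fix its state, with cost `1` on the transitions defined in the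
PFA and cost `2^n` on the added ones. Then the PFA is carefully synchronizing if and only
if `A'` has a reset word `w` of synchronization cost `γ(w) = max_q γ(q, w) ≤ 2^n - 1`. -/
theorem carefully_synchronizing_iff_budget {Q A : Type*} [Fintype Q] [Nonempty Q]
    [DecidableEq Q] (δp : Q → A → Option Q) :
    (∃ w : List A, IsCarefulReset δp w) ↔
      ∃ w : List A,
        IsResetFrom (fun q a => (δp q a).getD q) Finset.univ w ∧
        Finset.univ.sup
            (fun q => wordCost (fun q a => (δp q a).getD q)
              (fun q a => if (δp q a).isSome then 1 else 2 ^ Fintype.card Q) q w)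
          ≤ 2 ^ Fintype.card Q - 1 := by
  set δ := fun q a => (δp q a).getD q with hδ
  constructor
  · rintro ⟨w0, hw0⟩
    obtain ⟨w, ⟨p, hp⟩, hlen⟩ := forward_aux' δp w0.length w0 rfl hw0
    refine ⟨w, ?_, ?_⟩
    · unfold IsResetFrom
      have himg : (Finset.univ.image fun q : Q => applyWord δ q w) = {p} := by
        apply Finset.eq_singleton_iff_nonempty_unique_mem.mpr
        constructor
        · exact (Finset.image_nonempty).mpr Finset.univ_nonempty
        · intro x hx
          obtain ⟨q, -, hq⟩ := Finset.mem_image.mp hx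
          rw [← hq]
          exact pApply_eq_some δp w q p (hp q)
      rw [himg]; simp
    · apply Finset.sup_le
      intro q _
      rw [cost_eq_length δp (Fintype.card Q) w q (by rw [hp q]; rfl)]
      exact hlen
  · rintro ⟨w, hreset, hcost⟩
    unfold IsResetFrom at hreset
    obtain ⟨p, hp⟩ := Finset.card_eq_one.mp hreset
    refine ⟨w, p, fun q => ?_⟩
    have hq : applyWord δ q w = p := by
      have : applyWord δ q w ∈ (Finset.univ.image fun q : Q => applyWord δ q w) :=
        Finset.mem_image.mpr ⟨q, Finset.mem_univ q, rfl⟩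
      rw [hp] at this
      simpa using this
    have hc : wordCost δ (fun q a => if (δp q a).isSome then 1 else 2 ^ Fintype.card Q) q w
        ≤ 2 ^ Fintype.card Q - 1 :=
      le_trans (Finset.le_sup (f := fun q => wordCost δ (fun q a => if (δp q a).isSome then 1 else 2 ^ Fintype.card Q) q w) (Finset.mem_univ q)) hcost
    rw [cost_le_defined δp (Fintype.card Q) w q hc, hq]
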